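/- If f ∈ S^m_{ρ,δ}(Ξ) is elliptic (|f(x,ξ)| ≥ C⟨ξ⟩^m for |ξ| ≥ R) and z ∈ ℂ is such that f(x,ξ) − z never vanishes, then the pointwise inverse (x,ξ) ↦ (f(x,ξ) − z)^{−1} belongs to S^{−m}_{ρ,δ}(Ξ), provided m > 0 and f is real-valued. -/

import Mathlib

/- STATEMENT 9: If f ∈ S^m_{ρ,δ}(Ξ) is elliptic, m > 0, f real-valued, and
z ∈ ℂ avoids the (closure of the) range of f, so that f − z never vanishes,
then (f − z)^{−1} (pointwise) belongs to S^{−m}_{ρ,δ}(Ξ). -/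


noncomputable section

abbrev Evec (n : ℕ) := EuclideanSpace ℝ (Fin n)
abbrev Xi (n : ℕ) := Evec n × Evec n

/-- Directional derivative operator. -/
noncomputable def dd {n : ℕ} (v : Xi n) (f : Xi n → ℂ) : Xi n → ℂ :=
  fun p => fderiv ℝ f p v

/-- The iterated partial derivative ∂ₓ^a ∂_ξ^α. -/
noncomputable def derOps {n : ℕ} (a α : Fin n → ℕ) : (Xi n → ℂ) → (Xi n → ℂ) :=
  (((List.ofFn fun j : Fin n => (dd ((EuclideanSpace.single j (1:ℝ)), (0 : Evec n)))^[a j]) ++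
    (List.ofFn fun j : Fin n => (dd ((0 : Evec n), EuclideanSpace.single j (1:ℝ)))^[α j])).foldr
    (· ∘ ·) id)

/-- The weight ⟨ξ⟩^{−m+ρ|α|−δ|a|}, with ⟨ξ⟩ = (1+|ξ|²)^{1/2}. -/
noncomputable def symbWeight {n : ℕ} (m ρ δ : ℝ) (a α : Fin n → ℕ) (p : Xi n) : ℝ :=
  Real.rpow (1 + ‖p.2‖ ^ 2)
    ((-m + ρ * (∑ j, (α j : ℝ)) - δ * (∑ j, (a j : ℝ))) / 2)

/-- Membership in the Hörmander class S^m_{ρ,δ}(Ξ). -/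
def InS (n : ℕ) (m ρ δ : ℝ) (f : Xi n → ℂ) : Prop :=
  ContDiff ℝ (⊤ : ℕ∞) f ∧ ∀ a α : Fin n → ℕ, ∃ C : ℝ, ∀ p : Xi n,
    symbWeight m ρ δ a α p * ‖derOps a α f p‖ ≤ C

/-- The seminorm |f|^{(m;ρ,δ)}_{(a,α)} = sup_{(x,ξ)} ⟨ξ⟩^{−m+ρ|α|−δ|a|}|∂ₓ^a∂_ξ^α f|. -/
noncomputable def symbSemi {n : ℕ} (m ρ δ : ℝ) (a α : Fin n → ℕ) (f : Xi n → ℂ) : ℝ :=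
  ⨆ p : Xi n, symbWeight m ρ δ a α p * ‖derOps a α f p‖

/-! ### Auxiliary machinery -/

attribute [-instance] Sum.instBEq

namespace EllAux

abbrev Dir (n : ℕ) := Sum (Fin n) (Fin n)

def vecD {n : ℕ} : Dir n → Xi n
  | .inl j => ((EuclideanSpace.single j (1:ℝ)), (0 : Evec n))
  | .inr j => ((0 : Evec n), EuclideanSpace.single j (1:ℝ))

/-- Iterated directional derivative along a list of coordinate directions. -/
noncomputable def DL {n : ℕ} (L : List (Dir n)) (h : Xi n → ℂ) : Xi n → ℂ :=
  (L.map fun d => dd (vecD d)).foldr (· ∘ ·) id h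

def wtD {n : ℕ} (ρ δ : ℝ) : Dir n → ℝ
  | .inl _ => δ
  | .inr _ => -ρ

def ws {n : ℕ} (ρ δ : ℝ) (L : List (Dir n)) : ℝ := (L.map (wtD ρ δ)).sum

noncomputable def wgt {n : ℕ} (e : ℝ) (p : Xi n) : ℝ :=
  Real.rpow (1 + ‖p.2‖ ^ 2) (e / 2)

lemma base_one_le {n : ℕ} (p : Xi n) : (1:ℝ) ≤ 1 + ‖p.2‖ ^ 2 :=
  le_add_of_nonneg_right (by positivity)

lemma base_pos {n : ℕ} (p : Xi n) : (0:ℝ) < 1 + ‖p.2‖ ^ 2 :=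
  lt_of_lt_of_le one_pos (base_one_le p)

lemma wgt_pos {n : ℕ} (e : ℝ) (p : Xi n) : 0 < wgt e p :=
  Real.rpow_pos_of_pos (base_pos p) _

lemma wgt_add {n : ℕ} (e₁ e₂ : ℝ) (p : Xi n) :
    wgt (e₁ + e₂) p = wgt e₁ p * wgt e₂ p := by
  unfold wgt
  rw [show (e₁ + e₂) / 2 = e₁ / 2 + e₂ / 2 by ring]
  exact Real.rpow_add (base_pos p) _ _

lemma wgt_zero {n : ℕ} (p : Xi n) : wgt 0 p = 1 := by
  simp [wgt, Real.rpow_def_of_pos (base_pos p)]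

lemma wgt_neg {n : ℕ} (e : ℝ) (p : Xi n) : wgt (-e) p = (wgt e p)⁻¹ := by
  unfold wgt
  rw [show (-e) / 2 = -(e / 2) by ring]
  exact Real.rpow_neg (base_pos p).le _

lemma le_of_wgt_mul_le {n : ℕ} {e : ℝ} {p : Xi n} {A C : ℝ}
    (h : wgt (-e) p * A ≤ C) : A ≤ C * wgt e p := by
  have h2 := mul_le_mul_of_nonneg_left h (wgt_pos e p).le
  calc A = wgt e p * wgt (-e) p * A := by
        rw [← wgt_add, add_neg_cancel, wgt_zero, one_mul]
    _ = wgt e p * (wgt (-e) p * A) := by ring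
    _ ≤ wgt e p * C := h2
    _ = C * wgt e p := mul_comm _ _

lemma wgt_mul_le_of_le {n : ℕ} {e : ℝ} {p : Xi n} {A C : ℝ}
    (h : A ≤ C * wgt e p) : wgt (-e) p * A ≤ C := by
  calc wgt (-e) p * A ≤ wgt (-e) p * (C * wgt e p) :=
        mul_le_mul_of_nonneg_left h (wgt_pos _ _).le
    _ = C * (wgt (-e) p * wgt e p) := by ring
    _ = C := by rw [← wgt_add, neg_add_cancel, wgt_zero, mul_one]

/-! ### Basic properties of `DL` -/

lemma comp_foldr {β : Type*} : ∀ (A B : List (β → β)) (x : β),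
    (A ++ B).foldr (· ∘ ·) id x = A.foldr (· ∘ ·) id (B.foldr (· ∘ ·) id x)
  | [], _, _ => rfl
  | f :: t, B, x => congrArg f (comp_foldr t B x)

lemma DL_nil {n : ℕ} (h : Xi n → ℂ) : DL [] h = h := rfl

lemma DL_cons {n : ℕ} (v : Dir n) (L : List (Dir n)) (h : Xi n → ℂ) :
    DL (v :: L) h = dd (vecD v) (DL L h) := rfl

lemma DL_append {n : ℕ} (L₁ L₂ : List (Dir n)) (h : Xi n → ℂ) :
    DL (L₁ ++ L₂) h = DL L₁ (DL L₂ h) := by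
  unfold DL
  rw [List.map_append]
  exact comp_foldr _ _ h

lemma DL_concat {n : ℕ} (L : List (Dir n)) (v : Dir n) (h : Xi n → ℂ) :
    DL (L ++ [v]) h = DL L (dd (vecD v) h) := by
  rw [DL_append]; rfl

lemma contDiff_dd {n : ℕ} {h : Xi n → ℂ} (hh : ContDiff ℝ (⊤ : ℕ∞) h) (v : Xi n) :
    ContDiff ℝ (⊤ : ℕ∞) (dd v h) :=
  (hh.fderiv_right (by simp)).clm_apply contDiff_const

lemma contDiff_DL {n : ℕ} {h : Xi n → ℂ} (L : List (Dir n)) (hh : ContDiff ℝ (⊤ : ℕ∞) h) :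
    ContDiff ℝ (⊤ : ℕ∞) (DL L h) := by
  induction L with
  | nil => exact hh
  | cons v t ih => exact contDiff_dd ih (vecD v)

lemma dd_add {n : ℕ} {a b : Xi n → ℂ} (ha : ContDiff ℝ (⊤ : ℕ∞) a) (hb : ContDiff ℝ (⊤ : ℕ∞) b) (v : Xi n) :
    dd v (fun q => a q + b q) = fun q => dd v a q + dd v b q := by
  funext p
  show fderiv ℝ (fun q => a q + b q) p v = fderiv ℝ a p v + fderiv ℝ b p v
  rw [fderiv_fun_add (ha.differentiable (by simp) p) (hb.differentiable (by simp) p)]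
  rfl

lemma dd_neg {n : ℕ} (a : Xi n → ℂ) (v : Xi n) :
    dd v (fun q => -(a q)) = fun q => -(dd v a q) := by
  funext p
  show fderiv ℝ (fun q => -(a q)) p v = -(fderiv ℝ a p v)
  rw [fderiv_fun_neg]
  rfl

lemma dd_mul {n : ℕ} {a b : Xi n → ℂ} (ha : ContDiff ℝ (⊤ : ℕ∞) a) (hb : ContDiff ℝ (⊤ : ℕ∞) b) (v : Xi n) :
    dd v (fun q => a q * b q) = fun q => a q * dd v b q + b q * dd v a q := by
  funext p
  show fderiv ℝ (fun q => a q * b q) p v = _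
  rw [fderiv_fun_mul (ha.differentiable (by simp) p) (hb.differentiable (by simp) p)]
  simp [dd, smul_eq_mul]

lemma DL_add {n : ℕ} (L : List (Dir n)) {a b : Xi n → ℂ}
    (ha : ContDiff ℝ (⊤ : ℕ∞) a) (hb : ContDiff ℝ (⊤ : ℕ∞) b) :
    DL L (fun q => a q + b q) = fun q => DL L a q + DL L b q := by
  induction L with
  | nil => rfl
  | cons v t ih =>
    show dd (vecD v) (DL t fun q => a q + b q) = _
    rw [ih, dd_add (contDiff_DL t ha) (contDiff_DL t hb)]
    rfl

lemma DL_neg {n : ℕ} (L : List (Dir n)) (a : Xi n → ℂ) :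
    DL L (fun q => -(a q)) = fun q => -(DL L a q) := by
  induction L with
  | nil => rfl
  | cons v t ih =>
    show dd (vecD v) (DL t fun q => -(a q)) = _
    rw [ih, dd_neg]
    rfl

lemma dd_comm {n : ℕ} {h : Xi n → ℂ} (hh : ContDiff ℝ (⊤ : ℕ∞) h) (v w : Xi n) :
    dd v (dd w h) = dd w (dd v h) := by
  funext p
  have hd : ContDiff ℝ (⊤ : ℕ∞) (fderiv ℝ h) := hh.fderiv_right (by simp)
  have hda : DifferentiableAt ℝ (fderiv ℝ h) p := (hd.differentiable (by simp) p)
  have key : ∀ a b : Xi n,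
      fderiv ℝ (fun q => fderiv ℝ h q b) p a = fderiv ℝ (fderiv ℝ h) p a b := by
    intro a b
    rw [fderiv_clm_apply hda (differentiableAt_const b)]
    simp
  show fderiv ℝ (fun q => fderiv ℝ h q w) p v = fderiv ℝ (fun q => fderiv ℝ h q v) p w
  rw [key v w, key w v]
  exact (hh.contDiffAt.isSymmSndFDerivAt (by rw [minSmoothness_of_isRCLikeNormedField]; exact WithTop.coe_le_coe.mpr (le_top : (2 : ℕ∞) ≤ ⊤))) v w

lemma DL_perm {n : ℕ} {h : Xi n → ℂ} (hh : ContDiff ℝ (⊤ : ℕ∞) h)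
    {L₁ L₂ : List (Dir n)} (hp : L₁.Perm L₂) : DL L₁ h = DL L₂ h := by
  induction hp with
  | nil => rfl
  | cons x _ ih =>
    simp only [DL_cons, ih]
  | swap x y l =>
    simp only [DL_cons]
    exact dd_comm (contDiff_DL l hh) _ _
  | trans _ _ ih₁ ih₂ => rw [ih₁, ih₂]

/-! ### `ws` lemmas -/

lemma ws_nil {n : ℕ} (ρ δ : ℝ) : ws (n := n) ρ δ [] = 0 := rfl

lemma ws_append {n : ℕ} (ρ δ : ℝ) (L₁ L₂ : List (Dir n)) :
    ws ρ δ (L₁ ++ L₂) = ws ρ δ L₁ + ws ρ δ L₂ := by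
  simp [ws]

lemma ws_concat {n : ℕ} (ρ δ : ℝ) (L : List (Dir n)) (v : Dir n) :
    ws ρ δ (L ++ [v]) = ws ρ δ L + wtD ρ δ v := by
  simp [ws]

lemma ws_perm {n : ℕ} (ρ δ : ℝ) {L₁ L₂ : List (Dir n)} (hp : L₁.Perm L₂) :
    ws ρ δ L₁ = ws ρ δ L₂ :=
  (hp.map (wtD ρ δ)).sum_eq

/-! ### Canonical list and `derOps` -/

def canon {n : ℕ} (a α : Fin n → ℕ) : List (Dir n) :=
  (List.ofFn fun j => List.replicate (a j) (Sum.inl j : Dir n)).flatten ++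
  (List.ofFn fun j => List.replicate (α j) (Sum.inr j : Dir n)).flatten

lemma DL_flatten {n : ℕ} : ∀ (Ls : List (List (Dir n))) (h : Xi n → ℂ),
    DL Ls.flatten h = (Ls.map fun l => (DL l : (Xi n → ℂ) → Xi n → ℂ)).foldr (· ∘ ·) id h
  | [], _ => rfl
  | l :: t, h => by
    show DL (l ++ List.flatten t) h = _
    rw [DL_append, DL_flatten t h]
    rfl

lemma DL_replicate {n : ℕ} (k : ℕ) (d : Dir n) (h : Xi n → ℂ) :
    DL (List.replicate k d) h = (dd (vecD d))^[k] h := by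
  induction k with
  | zero => rfl
  | succ k ih =>
    rw [List.replicate_succ, DL_cons, ih, Function.iterate_succ_apply']

lemma derOps_eq {n : ℕ} (a α : Fin n → ℕ) (h : Xi n → ℂ) :
    derOps a α h = DL (canon a α) h := by
  unfold derOps canon
  rw [comp_foldr, DL_append, DL_flatten, DL_flatten]
  have hA : (List.ofFn fun j => List.replicate (a j) (Sum.inl j : Dir n)).map
      (fun l => (DL l : (Xi n → ℂ) → Xi n → ℂ)) =
      List.ofFn fun j : Fin n =>
        (dd ((EuclideanSpace.single j (1:ℝ)), (0 : Evec n)))^[a j] := by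
    rw [List.map_ofFn]
    congr 1
    funext j
    funext h'
    exact DL_replicate (a j) (Sum.inl j) h'
  have hB : (List.ofFn fun j => List.replicate (α j) (Sum.inr j : Dir n)).map
      (fun l => (DL l : (Xi n → ℂ) → Xi n → ℂ)) =
      List.ofFn fun j : Fin n =>
        (dd ((0 : Evec n), EuclideanSpace.single j (1:ℝ)))^[α j] := by
    rw [List.map_ofFn]
    congr 1
    funext j
    funext h'
    exact DL_replicate (α j) (Sum.inr j) h'
  rw [hA, hB]

lemma ws_canon {n : ℕ} (ρ δ : ℝ) (a α : Fin n → ℕ) :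
    ws ρ δ (canon a α) = δ * (∑ j, (a j : ℝ)) - ρ * (∑ j, (α j : ℝ)) := by
  unfold canon
  rw [ws_append]
  have h1 : ∀ (b : Fin n → ℕ) (d : Fin n → Dir n),
      ws ρ δ (List.ofFn fun j => List.replicate (b j) (d j)).flatten
        = ∑ j, (b j : ℝ) * wtD ρ δ (d j) := by
    intro b d
    unfold ws
    rw [List.map_flatten, List.sum_flatten, List.map_ofFn, List.map_ofFn, List.sum_ofFn]
    congr 1
    funext j
    simp [Function.comp, List.map_replicate, List.sum_replicate, nsmul_eq_mul]
  rw [h1 a (fun j => Sum.inl j), h1 α (fun j => Sum.inr j)]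
  simp only [wtD]
  rw [← Finset.sum_mul, ← Finset.sum_mul]
  ring

lemma count_flatten_rep_eq {n : ℕ} (b : Fin n → ℕ) (d : Fin n → Dir n)
    (hd : Function.Injective d) (i : Fin n) :
    ((List.ofFn fun j => List.replicate (b j) (d j)).flatten).count (d i) = b i := by
  rw [List.count_flatten, List.map_ofFn, List.sum_ofFn]
  have hterm : ∀ j : Fin n,
      (List.count (d i) ∘ fun j => List.replicate (b j) (d j)) j
        = if j = i then b j else 0 := by
    intro j
    by_cases h : j = i
    · subst h
      simp [List.count_replicate]
    · have hne : d j ≠ d i := fun hc => h (hd hc)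
      simp [List.count_replicate, hne, h]
  rw [Finset.sum_congr rfl (fun j _ => hterm j)]
  simp

lemma count_flatten_rep_ne {n : ℕ} (b : Fin n → ℕ) (d : Fin n → Dir n)
    (x : Dir n) (hx : ∀ j, d j ≠ x) :
    ((List.ofFn fun j => List.replicate (b j) (d j)).flatten).count x = 0 := by
  rw [List.count_flatten, List.map_ofFn, List.sum_ofFn]
  apply Finset.sum_eq_zero
  intro j _
  simp [List.count_replicate, hx j]

lemma perm_canon {n : ℕ} (L : List (Dir n)) :
    L.Perm (canon (fun j => L.count (Sum.inl j)) (fun j => L.count (Sum.inr j))) := by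
  rw [List.perm_iff_count]
  intro x
  unfold canon
  rw [List.count_append]
  have hinl : Function.Injective (fun j : Fin n => (Sum.inl j : Dir n)) :=
    fun a b h => by simpa using h
  have hinr : Function.Injective (fun j : Fin n => (Sum.inr j : Dir n)) :=
    fun a b h => by simpa using h
  cases x with
  | inl i =>
    rw [count_flatten_rep_eq (fun j => L.count (Sum.inl j)) _ hinl i,
      count_flatten_rep_ne (fun j => L.count (Sum.inr j)) _ _
        (fun j hj => Sum.inr_ne_inl hj), add_zero]
  | inr i =>
    rw [count_flatten_rep_eq (fun j => L.count (Sum.inr j)) _ hinr i,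
      count_flatten_rep_ne (fun j => L.count (Sum.inl j)) _ _
        (fun j hj => Sum.inl_ne_inr hj), zero_add]

/-! ### Leibniz product bound -/

lemma mul_bound {n : ℕ} (ρ δ : ℝ) (L : List (Dir n)) :
    ∀ (u w : Xi n → ℂ) (μ ν : ℝ), ContDiff ℝ (⊤ : ℕ∞) u → ContDiff ℝ (⊤ : ℕ∞) w →
    (∀ S : List (Dir n), S.length ≤ L.length →
      ∃ C, ∀ p, ‖DL S u p‖ ≤ C * wgt (μ + ws ρ δ S) p) →
    (∀ S : List (Dir n), S.length ≤ L.length →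
      ∃ C, ∀ p, ‖DL S w p‖ ≤ C * wgt (ν + ws ρ δ S) p) →
    ∃ C, ∀ p, ‖DL L (fun q => u q * w q) p‖ ≤ C * wgt (μ + ν + ws ρ δ L) p := by
  induction L using List.reverseRecOn with
  | nil =>
    intro u w μ ν _ _ hub hwb
    obtain ⟨C1, h1⟩ := hub [] le_rfl
    obtain ⟨C2, h2⟩ := hwb [] le_rfl
    refine ⟨C1 * C2, fun p => ?_⟩
    have h1p := h1 p
    have h2p := h2 p
    rw [DL_nil] at h1p h2p ⊢
    have e : μ + ν + ws ρ δ ([] : List (Dir n)) = (μ + ws ρ δ ([] : List (Dir n))) + (ν + ws ρ δ ([] : List (Dir n))) := by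
      rw [ws_nil]; ring
    rw [e, wgt_add]
    calc ‖u p * w p‖ = ‖u p‖ * ‖w p‖ := norm_mul _ _
      _ ≤ (C1 * wgt (μ + ws ρ δ []) p) * (C2 * wgt (ν + ws ρ δ []) p) :=
          mul_le_mul h1p h2p (norm_nonneg _) (le_trans (norm_nonneg _) h1p)
      _ = C1 * C2 * (wgt (μ + ws ρ δ []) p * wgt (ν + ws ρ δ []) p) := by ring
  | append_singleton L v ih =>
    intro u w μ ν hu hw hub hwb
    have hlen : L.length ≤ (L ++ [v]).length := by simp
    have hddu : ContDiff ℝ (⊤ : ℕ∞) (dd (vecD v) u) := contDiff_dd hu (vecD v)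
    have hddw : ContDiff ℝ (⊤ : ℕ∞) (dd (vecD v) w) := contDiff_dd hw (vecD v)
    obtain ⟨C1, h1⟩ := ih u (dd (vecD v) w) μ (ν + wtD ρ δ v) hu hddw
      (fun S hS => hub S (hS.trans hlen))
      (fun S hS => by
        obtain ⟨C, h⟩ := hwb (S ++ [v]) (by simp; omega)
        refine ⟨C, fun p => ?_⟩
        have hp := h p
        rw [DL_concat] at hp
        rw [show ν + wtD ρ δ v + ws ρ δ S = ν + ws ρ δ (S ++ [v]) by rw [ws_concat]; ring]
        exact hp)
    obtain ⟨C2, h2⟩ := ih w (dd (vecD v) u) ν (μ + wtD ρ δ v) hw hddu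
      (fun S hS => hwb S (hS.trans hlen))
      (fun S hS => by
        obtain ⟨C, h⟩ := hub (S ++ [v]) (by simp; omega)
        refine ⟨C, fun p => ?_⟩
        have hp := h p
        rw [DL_concat] at hp
        rw [show μ + wtD ρ δ v + ws ρ δ S = μ + ws ρ δ (S ++ [v]) by rw [ws_concat]; ring]
        exact hp)
    refine ⟨C1 + C2, fun p => ?_⟩
    have e1 : DL (L ++ [v]) (fun q => u q * w q) =
        fun q => DL L (fun q' => u q' * dd (vecD v) w q') q
          + DL L (fun q' => w q' * dd (vecD v) u q') q := by
      rw [DL_concat, dd_mul hu hw, DL_add L (hu.mul hddw) (hw.mul hddu)]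
    rw [e1]
    have hA := h1 p
    have hB := h2 p
    rw [show μ + (ν + wtD ρ δ v) + ws ρ δ L = μ + ν + ws ρ δ (L ++ [v]) by
      rw [ws_concat]; ring] at hA
    rw [show ν + (μ + wtD ρ δ v) + ws ρ δ L = μ + ν + ws ρ δ (L ++ [v]) by
      rw [ws_concat]; ring] at hB
    calc ‖DL L (fun q' => u q' * dd (vecD v) w q') p
          + DL L (fun q' => w q' * dd (vecD v) u q') p‖
        ≤ ‖DL L (fun q' => u q' * dd (vecD v) w q') p‖
          + ‖DL L (fun q' => w q' * dd (vecD v) u q') p‖ := norm_add_le _ _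
      _ ≤ C1 * wgt (μ + ν + ws ρ δ (L ++ [v])) p + C2 * wgt (μ + ν + ws ρ δ (L ++ [v])) p :=
          add_le_add hA hB
      _ = (C1 + C2) * wgt (μ + ν + ws ρ δ (L ++ [v])) p := by ring

end EllAux

open EllAux

theorem elliptic_resolvent_symbol
    (n : ℕ) (m ρ δ : ℝ) (hδ : 0 ≤ δ) (hδρ : δ ≤ ρ) (hρ : ρ ≤ 1) (hm : 0 < m)
    (f : Xi n → ℂ) (hf : InS n m ρ δ f)
    (hreal : ∀ p : Xi n, (f p).im = 0)
    (helliptic : ∃ R C : ℝ, 0 < C ∧ ∀ p : Xi n, R ≤ ‖p.2‖ →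
      C * Real.rpow (1 + ‖p.2‖ ^ 2) (m / 2) ≤ ‖f p‖)
    (z : ℂ) (hz : z ∉ closure (Set.range f)) :
    (∀ p : Xi n, f p - z ≠ 0) ∧
    InS n (-m) ρ δ (fun p => (f p - z)⁻¹) := by
  -- distance from z to the range
  rw [Metric.mem_closure_iff] at hz
  push_neg at hz
  obtain ⟨ε, hε, hεb⟩ := hz
  have hεlb : ∀ p : Xi n, ε ≤ ‖f p - z‖ := by
    intro p
    have h := hεb (f p) ⟨p, rfl⟩
    rw [Complex.dist_eq] at h
    calc ε ≤ ‖z - f p‖ := h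
      _ = ‖f p - z‖ := norm_sub_rev z (f p)
  have hne : ∀ p : Xi n, f p - z ≠ 0 := by
    intro p h0
    have := hεlb p
    rw [h0] at this
    simp at this
    linarith
  refine ⟨hne, ?_⟩
  set g : Xi n → ℂ := fun p => (f p - z)⁻¹ with hgdef
  have hfs : ContDiff ℝ (⊤ : ℕ∞) f := hf.1
  have hg : ContDiff ℝ (⊤ : ℕ∞) g := (hfs.sub contDiff_const).inv hne
  -- global elliptic lower bound for f - z
  obtain ⟨R, C, hC, hell⟩ := helliptic
  have hellw : ∀ p : Xi n, R ≤ ‖p.2‖ → C * wgt m p ≤ ‖f p‖ := hell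
  set az : ℝ := ‖z‖ with hazdef
  have haz : 0 ≤ az := norm_nonneg z
  set r₁ : ℝ := (2 * az / C + 1) ^ (1 / m : ℝ) with hr₁def
  set R₂ : ℝ := max R r₁ with hR₂def
  have hr₁0 : 0 ≤ r₁ := Real.rpow_nonneg (by positivity) _
  have hR₂0 : 0 ≤ R₂ := le_trans hr₁0 (le_max_right _ _)
  set M : ℝ := (1 + R₂ ^ 2) ^ (m / 2 : ℝ) with hMdef
  have hM : 0 < M := Real.rpow_pos_of_pos (by positivity) _
  set c : ℝ := min (C / 2) (ε / M) with hcdef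
  have hc : 0 < c := lt_min (by linarith) (div_pos hε hM)
  have hlow : ∀ p : Xi n, c * wgt m p ≤ ‖f p - z‖ := by
    intro p
    rcases le_total R₂ ‖p.2‖ with hbig | hsmall
    · have h1 : C * wgt m p ≤ ‖f p‖ :=
        hellw p (le_trans (le_max_left _ _) hbig)
      have hnorm : (0:ℝ) ≤ ‖p.2‖ := norm_nonneg _
      have ht : r₁ ≤ ‖p.2‖ := le_trans (le_max_right _ _) hbig
      have e1 : r₁ ^ (m : ℝ) = 2 * az / C + 1 := by
        rw [hr₁def, ← Real.rpow_mul (by positivity), one_div_mul_cancel (ne_of_gt hm),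
          Real.rpow_one]
      have e2 : ‖p.2‖ ^ (m : ℝ) ≤ wgt m p := by
        have ha : ‖p.2‖ ^ (m : ℝ) = (‖p.2‖ ^ 2) ^ (m / 2 : ℝ) := by
          rw [← Real.rpow_natCast ‖p.2‖ 2, ← Real.rpow_mul hnorm]
          congr 1
          push_cast
          ring
        rw [ha]
        unfold EllAux.wgt
        apply Real.rpow_le_rpow (by positivity) (by linarith) (by linarith)
      have h2 : 2 * az ≤ C * wgt m p := by
        have hmono : r₁ ^ (m : ℝ) ≤ ‖p.2‖ ^ (m : ℝ) :=
          Real.rpow_le_rpow hr₁0 ht hm.le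
        have : 2 * az / C + 1 ≤ wgt m p := by
          rw [← e1]; exact le_trans hmono e2
        have h3 : 2 * az / C ≤ wgt m p := by linarith
        calc 2 * az = (2 * az / C) * C := by field_simp
          _ ≤ wgt m p * C := mul_le_mul_of_nonneg_right h3 hC.le
          _ = C * wgt m p := mul_comm _ _
      have h4 : ‖f p‖ ≤ ‖f p - z‖ + az := by
        calc ‖f p‖ = ‖(f p - z) + z‖ := by ring_nf
          _ ≤ ‖f p - z‖ + ‖z‖ := norm_add_le _ _
      calc c * wgt m p ≤ (C / 2) * wgt m p :=
            mul_le_mul_of_nonneg_right (min_le_left _ _) (wgt_pos m p).le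
        _ ≤ ‖f p - z‖ := by nlinarith [wgt_pos m p]
    · have h1 : wgt m p ≤ M := by
        rw [hMdef]
        unfold EllAux.wgt
        apply Real.rpow_le_rpow (by positivity) ?_ (by linarith)
        have : ‖p.2‖ ^ 2 ≤ R₂ ^ 2 := pow_le_pow_left₀ (norm_nonneg _) hsmall 2
        linarith
      calc c * wgt m p ≤ (ε / M) * M :=
            mul_le_mul (min_le_right _ _) h1 (wgt_pos _ _).le (by positivity)
        _ = ε := by field_simp
        _ ≤ ‖f p - z‖ := hεlb p
  -- base bound for g
  have gbase : ∀ p : Xi n, ‖g p‖ ≤ c⁻¹ * wgt (-m) p := by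
    intro p
    have h0 : 0 < c * wgt m p := mul_pos hc (wgt_pos _ _)
    have e : ‖g p‖ = (‖f p - z‖)⁻¹ := by
      rw [hgdef]; exact norm_inv _
    rw [e, wgt_neg, ← mul_inv]
    exact inv_anti₀ h0 (hlow p)
  -- symbol bounds for f in DL form
  have fsym : ∀ L : List (Dir n), ∃ C', ∀ p,
      ‖DL L f p‖ ≤ C' * wgt (m + ws ρ δ L) p := by
    intro L
    set a : Fin n → ℕ := fun j => L.count (Sum.inl j) with hadef
    set α' : Fin n → ℕ := fun j => L.count (Sum.inr j) with hαdef
    have hperm : L.Perm (canon a α') := perm_canon L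
    have hDL : DL L f = DL (canon a α') f := DL_perm hfs hperm
    have hws : ws ρ δ L = ws ρ δ (canon a α') := ws_perm ρ δ hperm
    obtain ⟨C', hC'⟩ := hf.2 a α'
    refine ⟨C', fun p => ?_⟩
    rw [hDL, hws]
    have h1 := hC' p
    have hde : derOps a α' f p = DL (canon a α') f p := congrFun (derOps_eq a α' f) p
    rw [hde] at h1
    have h2 : symbWeight m ρ δ a α' p = wgt (-(m + ws ρ δ (canon a α'))) p := by
      show wgt (-m + ρ * (∑ j, (α' j : ℝ)) - δ * (∑ j, (a j : ℝ))) p = _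
      rw [show -(m + ws ρ δ (canon a α'))
          = -m + ρ * (∑ j, (α' j : ℝ)) - δ * (∑ j, (a j : ℝ)) by rw [ws_canon]; ring]
    rw [h2] at h1
    exact le_of_wgt_mul_le h1
  -- derivative formula for g
  have hddg : ∀ v : Xi n, dd v g = fun p => -(g p * (g p * dd v f p)) := by
    intro v
    have hu : ContDiff ℝ (⊤ : ℕ∞) (fun q => f q - z) := hfs.sub contDiff_const
    have hmul := dd_mul (n := n) hu hg v
    have hone : (fun q => (f q - z) * g q) = fun _ => (1 : ℂ) := by
      funext q
      rw [hgdef]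
      exact mul_inv_cancel₀ (hne q)
    rw [hone] at hmul
    have hzero : dd v (fun _ => (1 : ℂ)) = fun _ => (0 : ℂ) := by
      funext p
      show fderiv ℝ (fun _ => (1 : ℂ)) p v = 0
      rw [fderiv_const_apply]
      rfl
    rw [hzero] at hmul
    have hdu : dd v (fun q => f q - z) = dd v f := by
      funext p
      show fderiv ℝ (fun q => f q - z) p v = fderiv ℝ f p v
      rw [fderiv_sub_const]
    funext p
    have hp := congrFun hmul.symm p
    -- hp : (f p - z) * dd v g p + g p * dd v (f - z) p = 0
    have hp2 : (f p - z) * dd v g p = -(g p * dd v f p) := by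
      rw [hdu] at hp
      linear_combination hp
    have : dd v g p = g p * ((f p - z) * dd v g p) := by
      rw [← mul_assoc, hgdef]
      simp [inv_mul_cancel₀ (hne p)]
    rw [this, hp2]
    ring
  -- main induction: symbol bounds for g in DL form
  have gsym : ∀ N : ℕ, ∀ L : List (Dir n), L.length ≤ N → ∃ C', ∀ p,
      ‖DL L g p‖ ≤ C' * wgt (-m + ws ρ δ L) p := by
    intro N
    induction N with
    | zero =>
      intro L hL
      rw [Nat.le_zero, List.length_eq_zero_iff] at hL
      subst hL
      refine ⟨c⁻¹, fun p => ?_⟩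
      rw [DL_nil, show -m + ws ρ δ ([] : List (Dir n)) = -m by rw [ws_nil]; ring]
      exact gbase p
    | succ N ih =>
      intro L hL
      rcases List.eq_nil_or_concat L with rfl | ⟨L', v, rfl⟩
      · refine ⟨c⁻¹, fun p => ?_⟩
        rw [DL_nil, show -m + ws ρ δ ([] : List (Dir n)) = -m by rw [ws_nil]; ring]
        exact gbase p
      · rw [List.concat_eq_append] at hL ⊢
        have hL' : L'.length ≤ N := by
          simp at hL
          omega
        have hgS : ∀ S : List (Dir n), S.length ≤ L'.length → ∃ C', ∀ p,
            ‖DL S g p‖ ≤ C' * wgt (-m + ws ρ δ S) p :=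
          fun S hS => ih S (hS.trans hL')
        have hdfS : ∀ S : List (Dir n), ∃ C', ∀ p,
            ‖DL S (dd (vecD v) f) p‖
              ≤ C' * wgt ((m + wtD ρ δ v) + ws ρ δ S) p := by
          intro S
          obtain ⟨C', h⟩ := fsym (S ++ [v])
          refine ⟨C', fun p => ?_⟩
          have hp := h p
          rw [DL_concat] at hp
          rw [show (m + wtD ρ δ v) + ws ρ δ S = m + ws ρ δ (S ++ [v]) by
            rw [ws_concat]; ring]
          exact hp
        have hinner : ∀ S : List (Dir n), S.length ≤ L'.length → ∃ C', ∀ p,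
            ‖DL S (fun q => g q * dd (vecD v) f q) p‖
              ≤ C' * wgt ((-m + (m + wtD ρ δ v)) + ws ρ δ S) p := by
          intro S hS
          exact mul_bound ρ δ S g (dd (vecD v) f) (-m) (m + wtD ρ δ v) hg
            (contDiff_dd hfs (vecD v))
            (fun T hT => hgS T (hT.trans hS))
            (fun T _ => hdfS T)
        obtain ⟨C', hC'⟩ := mul_bound ρ δ L' g (fun q => g q * dd (vecD v) f q)
          (-m) (-m + (m + wtD ρ δ v)) hg (hg.mul (contDiff_dd hfs (vecD v))) hgS hinner
        refine ⟨C', fun p => ?_⟩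
        have e1 : DL (L' ++ [v]) g =
            fun q => -(DL L' (fun q' => g q' * (g q' * dd (vecD v) f q')) q) := by
          rw [DL_concat, hddg (vecD v), DL_neg]
        rw [e1]
        have hp := hC' p
        rw [show -m + (-m + (m + wtD ρ δ v)) + ws ρ δ L'
            = -m + ws ρ δ (L' ++ [v]) by rw [ws_concat]; ring] at hp
        calc ‖-(DL L' (fun q' => g q' * (g q' * dd (vecD v) f q')) p)‖
            = ‖DL L' (fun q' => g q' * (g q' * dd (vecD v) f q')) p‖ :=
              norm_neg _
          _ ≤ C' * wgt (-m + ws ρ δ (L' ++ [v])) p := hp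
  -- conclusion
  refine ⟨hg, fun a α => ?_⟩
  obtain ⟨C', hC'⟩ := gsym (canon a α).length (canon a α) le_rfl
  refine ⟨C', fun p => ?_⟩
  have h1 : derOps a α g p = DL (canon a α) g p := congrFun (derOps_eq a α g) p
  rw [h1]
  have h2 : symbWeight (-m) ρ δ a α p = wgt (-(-m + ws ρ δ (canon a α))) p := by
    show wgt (-(-m) + ρ * (∑ j, (α j : ℝ)) - δ * (∑ j, (a j : ℝ))) p = _
    rw [show -(-m + ws ρ δ (canon a α))
        = -(-m) + ρ * (∑ j, (α j : ℝ)) - δ * (∑ j, (a j : ℝ)) by rw [ws_canon]; ring]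
  rw [h2]
  exact wgt_mul_le_of_le (hC' p)
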